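/- arXiv:2412.00025 — 2 statements merged into one kernel-verified Lean document; each statement's English description precedes it below -/
import Mathlib

section
/- For every positive integer $k$, $\sum_{i=1}^{\infty} \frac{h_{k+i}}{i(k+i)} = -2\ln(2)\frac{h_k}{k} + \frac{h_k^{(2)}}{k} + \frac{h_k^2}{k} + \frac{1}{k}\sum_{i=1}^{k} \frac{h_i}{i}$. -/
open scoped BigOperators

noncomputable def H (k : ℕ) : ℝ := ∑ i ∈ Finset.Icc 1 k, (1 : ℝ) / i
noncomputable def Hp (n k : ℕ) : ℝ := ∑ i ∈ Finset.Icc 1 k, (1 : ℝ) / (i : ℝ) ^ n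
noncomputable def oh (n k : ℕ) : ℝ := ∑ i ∈ Finset.Icc 1 k, (1 : ℝ) / (2 * (i : ℝ) - 1) ^ n
noncomputable def Li (n : ℕ) (x : ℝ) : ℝ := ∑' m : ℕ, x ^ (m + 1) / ((m : ℝ) + 1) ^ n

open Filter Topology Finset

/-! Since `1 / (i (k + i)) = (1 / i - 1 / (k + i)) / k` and
`h_{k+i} = h_i + ∑_{t<k} 1 / (2 (i + t) + 1)`, `k` times the series splits into a telescoping
series in `h_j / j`, which sums to `∑_{j ≤ k} h_j / j` because `h_j / j → 0` (Cesàro), plus the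
`k` series `∑_i 1 / (i (2 i + 2 t + 1))`. By partial fractions and
`H_N - 2 h_N = 2 (H_N - H_{2N}) → -2 log 2`, the `t`-th one sums to
`(2 h_{t+1} - 2 log 2) / (2 t + 1)`, and `∑_{t<k} 2 h_{t+1} / (2 t + 1) = h_k ^ 2 + h_k^{(2)}`
by induction on `k`. -/

lemma sum_Icc_one_eq_sum_range {M : Type*} [AddCommMonoid M] (f : ℕ → M) (n : ℕ) :
    ∑ i ∈ Icc 1 n, f i = ∑ i ∈ range n, f (i + 1) := by
  rw [range_eq_Ico, sum_Ico_add' f 0 n 1, zero_add, Ico_add_one_right_eq_Icc]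

lemma oh_eq_sum_range (n k : ℕ) : oh n k = ∑ i ∈ range k, 1 / (2 * (i : ℝ) + 1) ^ n := by
  rw [oh, sum_Icc_one_eq_sum_range]
  push_cast
  ring_nf

lemma oh_add (n a b : ℕ) :
    oh n (a + b) = oh n a + ∑ i ∈ range b, 1 / (2 * ((a + i : ℕ) : ℝ) + 1) ^ n := by
  simp only [oh_eq_sum_range, sum_range_add]

lemma oh_succ (n k : ℕ) : oh n (k + 1) = oh n k + 1 / (2 * (k : ℝ) + 1) ^ n := by
  simp only [oh_eq_sum_range, sum_range_succ]

lemma oh_nonneg (n k : ℕ) : 0 ≤ oh n k := by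
  rw [oh_eq_sum_range]
  positivity

lemma oh_one_eq_harmonic (k : ℕ) : oh 1 k = (harmonic (2 * k) : ℝ) - harmonic k / 2 := by
  induction k with
  | zero => simp [oh]
  | succ k ih =>
    rw [oh_succ, ih, show 2 * (k + 1) = 2 * k + 1 + 1 by ring, harmonic_succ, harmonic_succ,
      harmonic_succ]
    push_cast
    field_simp
    ring

lemma oh_one_sq_add_oh_two (k : ℕ) :
    oh 1 k ^ 2 + oh 2 k = 2 * ∑ t ∈ range k, oh 1 (t + 1) / (2 * t + 1) := by
  induction k with
  | zero => simp [oh]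
  | succ k ih =>
    rw [sum_range_succ, mul_add, ← ih, oh_succ, oh_succ]
    field_simp
    ring

lemma sum_range_two_mul_oh_one_sub_div (c : ℝ) (k : ℕ) :
    ∑ t ∈ range k, (2 * oh 1 (t + 1) - c) / (2 * (t : ℝ) + 1) =
      oh 1 k ^ 2 + oh 2 k - c * oh 1 k := by
  have hterm : ∀ t : ℕ, (2 * oh 1 (t + 1) - c) / (2 * (t : ℝ) + 1) =
      2 * (oh 1 (t + 1) / (2 * t + 1)) - c * (1 / (2 * (t : ℝ) + 1) ^ 1) := by
    intro t
    ring
  simp only [hterm, sum_sub_distrib, ← mul_sum, ← oh_eq_sum_range, ← oh_one_sq_add_oh_two]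

lemma tendsto_harmonic_two_mul_sub_harmonic :
    Tendsto (fun n : ℕ => (harmonic (2 * n) : ℝ) - harmonic n) atTop (𝓝 (Real.log 2)) := by
  have h := (Real.tendsto_harmonic_sub_log.comp
    (tendsto_id.const_mul_atTop' two_pos : Tendsto (fun n : ℕ => 2 * n) atTop atTop)).sub
    Real.tendsto_harmonic_sub_log |>.add_const (Real.log 2)
  rw [sub_self, zero_add] at h
  refine h.congr' ?_
  filter_upwards [eventually_ne_atTop 0] with n hn
  simp only [Function.comp_apply]
  push_cast
  rw [Real.log_mul two_ne_zero (by exact_mod_cast hn)]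
  ring

lemma tendsto_one_div_two_mul_add_one_pow {n : ℕ} (hn : n ≠ 0) :
    Tendsto (fun i : ℕ => 1 / (2 * (i : ℝ) + 1) ^ n) atTop (𝓝 0) := by
  simp only [one_div]
  exact ((tendsto_pow_atTop hn).comp (tendsto_atTop_add_const_right _ 1
    (tendsto_natCast_atTop_atTop.const_mul_atTop two_pos))).inv_tendsto_atTop

lemma tendsto_sum_range_comp_add_of_tendsto_zero {G : Type*} [AddCommMonoid G]
    [TopologicalSpace G] [ContinuousAdd G] {g : ℕ → G} (hg : Tendsto g atTop (𝓝 0)) (k : ℕ) :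
    Tendsto (fun N => ∑ i ∈ range k, g (N + i)) atTop (𝓝 0) := by
  simpa using tendsto_finsetSum (range k) fun i _ => hg.comp (tendsto_add_atTop_nat i)

lemma tendsto_sum_range_sub_comp_add {G : Type*} [AddCommGroup G] [TopologicalSpace G]
    [IsTopologicalAddGroup G] {g : ℕ → G} (hg : Tendsto g atTop (𝓝 0)) (k : ℕ) :
    Tendsto (fun N => ∑ i ∈ range N, (g i - g (i + k))) atTop (𝓝 (∑ i ∈ range k, g i)) := by
  have h := (tendsto_const_nhds (x := ∑ i ∈ range k, g i)).sub
    (tendsto_sum_range_comp_add_of_tendsto_zero hg k)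
  rw [sub_zero] at h
  refine h.congr fun N => ?_
  rw [sum_sub_distrib, sub_eq_sub_iff_add_eq_add, ← sum_range_add, add_comm N k, sum_range_add]
  simp only [add_comm k]

lemma tendsto_oh_one_div : Tendsto (fun n : ℕ => oh 1 n / n) atTop (𝓝 0) :=
  (tendsto_one_div_two_mul_add_one_pow one_ne_zero).cesaro.congr fun n => by
    rw [oh_eq_sum_range, inv_mul_eq_div]

lemma tendsto_harmonic_sub_two_mul_oh_one_add (m : ℕ) :
    Tendsto (fun N : ℕ => (harmonic N : ℝ) - 2 * oh 1 (N + m)) atTop (𝓝 (-2 * Real.log 2)) := by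
  have h := (tendsto_harmonic_two_mul_sub_harmonic.const_mul (-2)).sub
    ((tendsto_sum_range_comp_add_of_tendsto_zero
      (tendsto_one_div_two_mul_add_one_pow one_ne_zero) m).const_mul 2)
  rw [mul_zero, sub_zero] at h
  refine h.congr fun N => ?_
  rw [oh_add, oh_one_eq_harmonic]
  push_cast
  ring

lemma tendsto_sum_range_one_div_mul_odd (t : ℕ) :
    Tendsto (fun N : ℕ => ∑ i ∈ range N, 1 / (((i : ℝ) + 1) * (2 * ((i : ℝ) + 1 + t) + 1)))
      atTop (𝓝 ((2 * oh 1 (t + 1) - 2 * Real.log 2) / (2 * t + 1))) := by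
  have h := ((tendsto_harmonic_sub_two_mul_oh_one_add (t + 1)).add_const
    (2 * oh 1 (t + 1))).div_const (2 * (t : ℝ) + 1)
  rw [show -2 * Real.log 2 + 2 * oh 1 (t + 1) = 2 * oh 1 (t + 1) - 2 * Real.log 2 by ring] at h
  have hpf : ∀ i : ℕ, 1 / (((i : ℝ) + 1) * (2 * ((i : ℝ) + 1 + t) + 1)) =
      (((i : ℝ) + 1)⁻¹ - 2 * (1 / (2 * ((t + 1 + i : ℕ) : ℝ) + 1) ^ 1)) / (2 * t + 1) := by
    intro i
    push_cast
    field_simp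
    ring
  refine h.congr fun N => ?_
  simp only [hpf, ← sum_div, sum_sub_distrib, ← mul_sum]
  rw [add_comm N, oh_add, harmonic]
  push_cast
  ring

lemma mul_oh_one_add_div_eq (k i : ℕ) :
    (k : ℝ) * (oh 1 (k + (i + 1)) / (((i : ℝ) + 1) * ((k : ℝ) + ((i : ℝ) + 1)))) =
      (oh 1 (i + 1) / ((i + 1 : ℕ) : ℝ) - oh 1 (i + k + 1) / ((i + k + 1 : ℕ) : ℝ)) +
        ∑ t ∈ range k, 1 / (((i : ℝ) + 1) * (2 * ((i : ℝ) + 1 + t) + 1)) := by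
  rw [show i + k + 1 = i + 1 + k by ring, add_comm k, oh_add]
  have hsum : ∑ t ∈ range k, 1 / (((i : ℝ) + 1) * (2 * ((i : ℝ) + 1 + t) + 1)) =
      (∑ t ∈ range k, 1 / (2 * ((i + 1 + t : ℕ) : ℝ) + 1) ^ 1) / ((i : ℝ) + 1) := by
    rw [sum_div]
    push_cast
    refine sum_congr rfl fun t _ => ?_
    field_simp
  rw [hsum]
  push_cast
  field_simp
  ring

theorem stmt16 (k : ℕ) (hk : 0 < k) : (∑' i : ℕ, oh 1 (k + (i+1)) / (((i : ℝ) + 1) * ((k : ℝ) + ((i : ℝ) + 1)))) = -2 * Real.log 2 * oh 1 k / (k : ℝ) + oh 2 k / (k : ℝ) + (oh 1 k)^2 / (k : ℝ) + (1 / (k : ℝ)) * ∑ i ∈ Finset.Icc 1 k, oh 1 i / (i : ℝ) := by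
  set a : ℕ → ℝ := fun i => oh 1 (k + (i+1)) / (((i : ℝ) + 1) * ((k : ℝ) + ((i : ℝ) + 1)))
  set g : ℕ → ℝ := fun j => oh 1 (j + 1) / ((j + 1 : ℕ) : ℝ)
  have hg : Tendsto g atTop (𝓝 0) := tendsto_oh_one_div.comp (tendsto_add_atTop_nat 1)
  have hpartial : ∀ N, (k : ℝ) * ∑ i ∈ range N, a i = ∑ i ∈ range N, (g i - g (i + k)) +
      ∑ t ∈ range k, ∑ i ∈ range N, 1 / (((i : ℝ) + 1) * (2 * ((i : ℝ) + 1 + t) + 1)) := by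
    intro N
    rw [mul_sum, sum_comm, ← sum_add_distrib]
    exact sum_congr rfl fun i _ => mul_oh_one_add_div_eq k i
  have hlim := ((tendsto_sum_range_sub_comp_add hg k).add (tendsto_finsetSum (range k)
    fun t _ => tendsto_sum_range_one_div_mul_odd t)).div_const (k : ℝ)
  have hk' : (k : ℝ) ≠ 0 := Nat.cast_ne_zero.mpr hk.ne'
  simp only [← hpartial, mul_div_cancel_left₀ _ hk'] at hlim
  have hsum := (hasSum_iff_tendsto_nat_of_nonneg
    (fun i => div_nonneg (oh_nonneg 1 _) (by positivity)) _).mpr hlim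
  rw [hsum.tsum_eq, sum_Icc_one_eq_sum_range, sum_range_two_mul_oh_one_sub_div]
  simp only [g]
  push_cast
  field_simp
  ring
end

section
/- For every positive integer $k$, $\sum_{i=1}^{k} \frac{h_i}{i+k} = \sum_{i=1}^{k} \frac{h_i}{i} - \frac{1}{2} H_k h_k$. -/
open scoped BigOperators

/-! Induction on `k`. Passing from `k` to `k + 1` replaces each weight `1 / (i + k)` by
`1 / (i + k + 1)`; by summation by parts the resulting change `∑ h_i (1/(i+k) - 1/(i+k+1))`
equals `∑_j (1/(2j-1)) (1/(j+k) - 1/(2k+1))`, which partial fractions reduce to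
`(h_k - (H_{2k} - H_k)) / (2k+1) = H_k / (2(2k+1))`, using `H_{2k} = h_k + H_k / 2`. -/

open Finset

theorem sum_Icc_partialSum_mul_sub {R : Type*} [CommRing R] (a g : ℕ → R) (k : ℕ) :
    ∑ i ∈ Icc 1 k, (∑ j ∈ Icc 1 i, a j) * (g i - g (i + 1)) =
      ∑ j ∈ Icc 1 k, a j * (g j - g (k + 1)) := by
  induction k with
  | zero => simp
  | succ n ih =>
    rw [sum_Icc_succ_top (by omega), sum_Icc_succ_top (by omega), sum_Icc_succ_top (by omega), ih]
    have regroup : ∑ j ∈ Icc 1 n, a j * (g j - g (n + 1 + 1)) =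
        ∑ j ∈ Icc 1 n, a j * (g j - g (n + 1)) +
          (∑ j ∈ Icc 1 n, a j) * (g (n + 1) - g (n + 1 + 1)) := by
      rw [sum_mul, ← sum_add_distrib]
      exact sum_congr rfl fun j _ => by ring
    rw [regroup]
    ring

theorem H_succ (n : ℕ) : H (n + 1) = H n + 1 / ((n : ℝ) + 1) := by
  rw [H, sum_Icc_succ_top (by omega), ← H]
  push_cast
  rfl

theorem oh_one_succ (n : ℕ) : oh 1 (n + 1) = oh 1 n + 1 / (2 * (n : ℝ) + 1) := by
  rw [oh, sum_Icc_succ_top (by omega), ← oh]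
  push_cast
  ring

theorem H_two_mul (k : ℕ) : H (2 * k) = oh 1 k + H k / 2 := by
  induction k with
  | zero => simp [H, oh]
  | succ n ih =>
    rw [show 2 * (n + 1) = 2 * n + 1 + 1 by ring, H_succ, H_succ, H_succ, oh_one_succ, ih]
    push_cast
    field_simp
    ring

theorem H_add (m k : ℕ) : H (m + k) = H k + ∑ j ∈ Icc 1 m, 1 / ((j : ℝ) + k) := by
  induction m with
  | zero => simp
  | succ m ih =>
    rw [show m + 1 + k = m + k + 1 by ring, H_succ, ih, sum_Icc_succ_top (by omega)]
    push_cast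
    ring

theorem sum_Icc_one_div_add_self (k : ℕ) :
    ∑ j ∈ Icc 1 k, 1 / ((j : ℝ) + k) = oh 1 k - H k / 2 := by
  have := H_add k k
  rw [← two_mul, H_two_mul] at this
  linarith

theorem sum_oh_one_mul_sub (k : ℕ) :
    ∑ i ∈ Icc 1 k, oh 1 i * (1 / ((i : ℝ) + k) - 1 / ((i : ℝ) + k + 1)) =
      H k / (2 * (2 * k + 1)) := by
  have byParts := sum_Icc_partialSum_mul_sub (fun j ↦ 1 / (2 * (j : ℝ) - 1))
    (fun i ↦ 1 / ((i : ℝ) + k)) k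
  have partialFractions : ∀ j ∈ Icc 1 k,
      1 / (2 * (j : ℝ) - 1) * (1 / ((j : ℝ) + k) - 1 / ((k : ℝ) + k + 1)) =
        1 / (2 * k + 1) * (1 / (2 * (j : ℝ) - 1) - 1 / ((j : ℝ) + k)) := by
    intro j hj
    have hj : (1 : ℝ) ≤ j := by exact_mod_cast (mem_Icc.mp hj).1
    have : 2 * (j : ℝ) - 1 ≠ 0 := by linarith
    have : (j : ℝ) + k ≠ 0 := by positivity
    field_simp
    ring
  simp only [Nat.cast_add, Nat.cast_one, add_right_comm _ (1 : ℝ)] at byParts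
  have oh_one : ∀ n, oh 1 n = ∑ j ∈ Icc 1 n, 1 / (2 * (j : ℝ) - 1) := by simp [oh]
  simp only [oh_one]
  rw [byParts, sum_congr rfl partialFractions, ← mul_sum, sum_sub_distrib,
    sum_Icc_one_div_add_self, oh_one]
  field_simp
  ring

theorem stmt19_general (k : ℕ) : ∑ i ∈ Finset.Icc 1 k, oh 1 i / ((i : ℝ) + (k : ℝ)) = (∑ i ∈ Finset.Icc 1 k, oh 1 i / (i : ℝ)) - (1/2) * H k * oh 1 k := by
  induction k with
  | zero => simp [H, oh]
  | succ n ih =>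
    have shift : ∑ i ∈ Icc 1 n, oh 1 i / ((i : ℝ) + (n + 1)) =
        ∑ i ∈ Icc 1 n, oh 1 i / ((i : ℝ) + n) - H n / (2 * (2 * n + 1)) := by
      rw [← sum_oh_one_mul_sub, ← sum_sub_distrib]
      refine sum_congr rfl fun i _ => ?_
      field_simp
      ring
    rw [sum_Icc_succ_top (by omega), sum_Icc_succ_top (by omega)]
    push_cast
    rw [shift, ih, H_succ, oh_one_succ]
    field_simp
    ring

theorem stmt19 (k : ℕ) (hk : 0 < k) : ∑ i ∈ Finset.Icc 1 k, oh 1 i / ((i : ℝ) + (k : ℝ)) = (∑ i ∈ Finset.Icc 1 k, oh 1 i / (i : ℝ)) - (1/2) * H k * oh 1 k :=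
  stmt19_general k
end
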